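/- Let x be a C-ℓ_1^k average in a Banach space with a bimonotone Schauder basis: x = (1/k)∑_{i=1}^k x_i with x_1 < ... < x_k successive blocks, ‖x_i‖ ≤ C for all i, and ‖x‖ ≥ 1. Then for every d ≤ k and every sequence of successive intervals E_1 < ... < E_d of ℕ, ∑_{i=1}^d ‖E_i x‖ ≤ C(1 + 2d/k), where E x denotes the restriction of x to coordinates in E. -/

import Mathlib

/-!
Write `x = (1/k) ∑ᵢ xᵢ`, so `∑ⱼ ‖Eⱼ x‖ ≤ (1/k) ∑ⱼ ∑ᵢ ‖Eⱼ xᵢ‖`, and each nonzero term is at most `C`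
by bimonotonicity. A block `xᵢ` meeting the interval `Eⱼ` either has its support inside `Eⱼ`,
which happens for at most one `j` per block, or straddles the left or the right end of `Eⱼ`,
which happens for at most one block per end since the blocks are successive. Hence at most
`k + 2d` terms are nonzero.
-/

open Finset Function

/-- `x 0 < x 1 < ⋯ < x (k-1)` are successive blocks. -/
def SuccBlocks (x : ℕ → (ℕ → ℝ)) (k : ℕ) : Prop :=
  ∀ i j, i < j → j < k → ∀ p q, x i p ≠ 0 → x j q ≠ 0 → p < q

theorem Set.OrdConnected.forall_lt_or_forall_gt_of_notMem {α : Type*} [LinearOrder α]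
    {s : Set α} (hs : s.OrdConnected) {r : α} (hr : r ∉ s) :
    (∀ q ∈ s, r < q) ∨ ∀ q ∈ s, q < r := by
  by_contra! h
  obtain ⟨⟨q, hq, hqr⟩, ⟨q', hq', hrq'⟩⟩ := h
  exact hr (hs.out hq hq' ⟨hqr, hrq'⟩)

theorem Set.OrdConnected.subset_or_nonempty_below_or_nonempty_above {α : Type*} [LinearOrder α]
    {s : Set α} (hs : s.OrdConnected) {t : Set α} (hst : (s ∩ t).Nonempty) :
    (t.Nonempty ∧ t ⊆ s) ∨ ((s ∩ t).Nonempty ∧ ({r | ∀ q ∈ s, r < q} ∩ t).Nonempty) ∨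
      ((s ∩ t).Nonempty ∧ ({r | ∀ q ∈ s, q < r} ∩ t).Nonempty) := by
  by_cases ht : t ⊆ s
  · exact Or.inl ⟨hst.mono Set.inter_subset_right, ht⟩
  obtain ⟨r, hrt, hrs⟩ := Set.not_subset.mp ht
  rcases hs.forall_lt_or_forall_gt_of_notMem hrs with h | h
  · exact Or.inr (Or.inl ⟨hst, r, h, hrt⟩)
  · exact Or.inr (Or.inr ⟨hst, r, h, hrt⟩)

theorem eq_of_subset_of_subset_of_forall_lt {α : Type*} [LinearOrder α] {d : ℕ}
    {E : ℕ → Set α} (hE : ∀ i j, i < j → j < d → ∀ p ∈ E i, ∀ q ∈ E j, p < q)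
    {S : Set α} (hS : S.Nonempty) {j j' : ℕ} (hj : j < d) (hj' : j' < d)
    (hSj : S ⊆ E j) (hSj' : S ⊆ E j') : j = j' := by
  obtain ⟨p, hp⟩ := hS
  rcases lt_trichotomy j j' with h | h | h
  · exact ((hE j j' h hj' p (hSj hp) p (hSj' hp)).ne rfl).elim
  · exact h
  · exact ((hE j' j h hj p (hSj' hp) p (hSj hp)).ne rfl).elim

theorem SuccBlocks.eq_of_inter_support_nonempty {x : ℕ → ℕ → ℝ} {k : ℕ} (hx : SuccBlocks x k)
    {A B : Set ℕ} (hAB : ∀ a ∈ A, ∀ b ∈ B, a < b) {i i' : ℕ} (hi : i < k) (hi' : i' < k)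
    (hiA : (A ∩ support (x i)).Nonempty) (hiB : (B ∩ support (x i)).Nonempty)
    (hi'A : (A ∩ support (x i')).Nonempty) (hi'B : (B ∩ support (x i')).Nonempty) :
    i = i' := by
  have key : ∀ {m n}, m < n → n < k →
      (B ∩ support (x m)).Nonempty → (A ∩ support (x n)).Nonempty → False := by
    rintro m n hmn hn ⟨b, hb, hbm⟩ ⟨a, ha, han⟩
    exact (hx m n hmn hn b a hbm han).asymm (hAB a ha b hb)
  rcases lt_trichotomy i i' with h | h | h
  · exact (key h hi' hiB hi'A).elim
  · exact h
  · exact (key h hi hi'B hiA).elim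

theorem Finset.sum_sum_boole_le_card {α β : Type*} (s : Finset α) (t : Finset β)
    (P : α → β → Prop) [DecidableRel P]
    (hP : ∀ a ∈ s, ∀ b ∈ t, ∀ b' ∈ t, P a b → P a b' → b = b') :
    ∑ a ∈ s, ∑ b ∈ t, (if P a b then (1 : ℝ) else 0) ≤ #s := by
  calc ∑ a ∈ s, ∑ b ∈ t, (if P a b then (1 : ℝ) else 0)
      = ∑ a ∈ s, (#{b ∈ t | P a b} : ℝ) := by simp only [sum_boole]
    _ ≤ ∑ _a ∈ s, (1 : ℝ) := by
      gcongr with a ha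
      have : #{b ∈ t | P a b} ≤ 1 := card_le_one.mpr fun b hb b' hb' => by
        rw [mem_filter] at hb hb'
        exact hP a ha b hb.1 b' hb'.1 hb.2 hb'.2
      exact_mod_cast this
    _ = #s := by simp

theorem Finset.sum_sum_le_of_forall_le_of_cover {α β : Type*} {s : Finset α} {t : Finset β}
    {F : α → β → ℝ} {C : ℝ} (hC0 : 0 ≤ C) (hF : ∀ a ∈ s, ∀ b ∈ t, F a b ≤ C)
    {I L R : α → β → Prop} (hcover : ∀ a ∈ s, ∀ b ∈ t, F a b ≠ 0 → I a b ∨ L a b ∨ R a b)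
    (hI : ∀ b ∈ t, ∀ a ∈ s, ∀ a' ∈ s, I a b → I a' b → a = a')
    (hL : ∀ a ∈ s, ∀ b ∈ t, ∀ b' ∈ t, L a b → L a b' → b = b')
    (hR : ∀ a ∈ s, ∀ b ∈ t, ∀ b' ∈ t, R a b → R a b' → b = b') :
    ∑ a ∈ s, ∑ b ∈ t, F a b ≤ C * (#t + 2 * #s) := by
  classical
  let w a b : ℝ := (if I a b then 1 else 0) + (if L a b then 1 else 0) + (if R a b then 1 else 0)
  have hFw : ∀ a ∈ s, ∀ b ∈ t, F a b ≤ C * w a b := by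
    intro a ha b hb
    by_cases hab : F a b = 0
    · rw [hab]
      positivity
    have hw : 1 ≤ w a b := by
      rcases hcover a ha b hb hab with h | h | h <;>
        simp only [w, h, if_true] <;> split_ifs <;> norm_num
    exact (hF a ha b hb).trans (le_mul_of_one_le_right hC0 hw)
  have hIcount : ∑ a ∈ s, ∑ b ∈ t, (if I a b then (1 : ℝ) else 0) ≤ #t := by
    rw [sum_comm]
    exact sum_sum_boole_le_card t s (fun b a => I a b) hI
  calc ∑ a ∈ s, ∑ b ∈ t, F a b
      ≤ ∑ a ∈ s, ∑ b ∈ t, C * w a b := sum_le_sum fun a ha => sum_le_sum (hFw a ha)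
    _ = C * (∑ a ∈ s, ∑ b ∈ t, (if I a b then (1 : ℝ) else 0) +
          ∑ a ∈ s, ∑ b ∈ t, (if L a b then (1 : ℝ) else 0) +
          ∑ a ∈ s, ∑ b ∈ t, (if R a b then (1 : ℝ) else 0)) := by
        simp only [w, ← mul_sum, sum_add_distrib]
    _ ≤ C * (#t + #s + #s) := by
        gcongr
        exacts [sum_sum_boole_le_card s t L hL, sum_sum_boole_le_card s t R hR]
    _ = C * (#t + 2 * #s) := by ring

theorem Seminorm.sum_indicator_sum_le_of_succBlocks (p : Seminorm ℝ (ℕ → ℝ)) {k d : ℕ}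
    {x : ℕ → ℕ → ℝ} (hx : SuccBlocks x k) {E : ℕ → Set ℕ} (hE : ∀ j < d, (E j).OrdConnected)
    (hEsucc : ∀ i j, i < j → j < d → ∀ p ∈ E i, ∀ q ∈ E j, p < q)
    {C : ℝ} (hC0 : 0 ≤ C) (hC : ∀ j < d, ∀ i < k, p ((E j).indicator (x i)) ≤ C) :
    ∑ j ∈ range d, p ((E j).indicator (∑ i ∈ range k, x i)) ≤ C * (k + 2 * d) := by
  have hsplit : ∀ j, p ((E j).indicator (∑ i ∈ range k, x i)) ≤
      ∑ i ∈ range k, p ((E j).indicator (x i)) := fun j => by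
    rw [indicator_sum]
    exact le_sum_of_subadditive p (map_zero p).le (map_add_le_add p) _ _
  have hcount := sum_sum_le_of_forall_le_of_cover hC0 (by simpa using hC)
    (I := fun j i => (support (x i)).Nonempty ∧ support (x i) ⊆ E j)
    (L := fun j i => (E j ∩ support (x i)).Nonempty ∧
      ({r | ∀ q ∈ E j, r < q} ∩ support (x i)).Nonempty)
    (R := fun j i => (E j ∩ support (x i)).Nonempty ∧
      ({r | ∀ q ∈ E j, q < r} ∩ support (x i)).Nonempty)
    (fun j hj i _ hji => (hE j (mem_range.mp hj)).subset_or_nonempty_below_or_nonempty_above <| by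
      by_contra hempty
      rw [Set.not_nonempty_iff_eq_empty, Set.inter_comm, ← Set.disjoint_iff_inter_eq_empty,
        ← Set.indicator_eq_zero'] at hempty
      exact hji (by rw [hempty, map_zero]))
    (fun i _ j hj j' hj' h h' => eq_of_subset_of_subset_of_forall_lt hEsucc h.1
      (mem_range.mp hj) (mem_range.mp hj') h.2 h'.2)
    (fun j _ i hi i' hi' h h' => hx.eq_of_inter_support_nonempty
      (A := {r | ∀ q ∈ E j, r < q}) (fun a ha b hb => ha b hb) (mem_range.mp hi)
      (mem_range.mp hi') h.2 h.1 h'.2 h'.1)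
    (fun j _ i hi i' hi' h h' => hx.eq_of_inter_support_nonempty
      (B := {r | ∀ q ∈ E j, q < r}) (fun a ha b hb => hb a ha) (mem_range.mp hi)
      (mem_range.mp hi') h.1 h.2 h'.1 h'.2)
  simpa using (sum_le_sum fun j _ => hsplit j).trans hcount

theorem Finset.ite_mem_eq_indicator {α M : Type*} [DecidableEq α] [Zero M] (F : Finset α)
    (v : α → M) : (fun q => if q ∈ F then v q else 0) = (F : Set α).indicator v := by
  ext q
  simp [Set.indicator_apply]

theorem stmt18_general (N : (ℕ → ℝ) → ℝ)
    (htri : ∀ v w : ℕ → ℝ, N (v + w) ≤ N v + N w)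
    (hsmul : ∀ (c : ℝ) (v : ℕ → ℝ), N (c • v) = |c| * N v)
    (hbimono : ∀ (v : ℕ → ℝ) (E : Finset ℕ), (∃ a b, E = Finset.Icc a b) →
      N (fun p => if p ∈ E then v p else 0) ≤ N v)
    (C : ℝ) (k : ℕ) (hk : 1 ≤ k)
    (x : ℕ → (ℕ → ℝ)) (hxsucc : SuccBlocks x k)
    (hxC : ∀ i < k, N (x i) ≤ C)
    (xavg : ℕ → ℝ) (hxavg : xavg = (1 / (k : ℝ)) • ∑ i ∈ range k, x i)
    (d : ℕ) (E : ℕ → Finset ℕ)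
    (hEint : ∀ i < d, ∃ a b, E i = Finset.Icc a b)
    (hEsucc : ∀ i j, i < j → j < d → ∀ p ∈ E i, ∀ q ∈ E j, p < q) :
    ∑ i ∈ range d, N (fun p => if p ∈ E i then xavg p else 0) ≤
      C * (1 + 2 * (d : ℝ) / (k : ℝ)) := by
  let p : Seminorm ℝ (ℕ → ℝ) := .of N htri fun c v => by rw [hsmul, Real.norm_eq_abs]
  have hE (j : ℕ) (hj : j < d) : (E j : Set ℕ).OrdConnected := by
    obtain ⟨a, b, hab⟩ := hEint j hj
    simpa [hab] using Set.ordConnected_Icc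
  have hpiece (j : ℕ) (hj : j < d) (i : ℕ) (hi : i < k) :
      p ((E j : Set ℕ).indicator (x i)) ≤ C := by
    rw [← ite_mem_eq_indicator]
    exact (hbimono _ _ (hEint j hj)).trans (hxC i hi)
  have hC0 : 0 ≤ C := (apply_nonneg p (x 0)).trans (hxC 0 hk)
  have hk0 : (k : ℝ) ≠ 0 := by positivity
  calc ∑ j ∈ range d, N (fun q => if q ∈ E j then xavg q else 0)
      = 1 / k * ∑ j ∈ range d, p ((E j : Set ℕ).indicator (∑ i ∈ range k, x i)) := by
        rw [mul_sum]
        refine sum_congr rfl fun j _ => ?_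
        have hsmul_indicator : (E j : Set ℕ).indicator ((1 / k : ℝ) • ∑ i ∈ range k, x i) =
            (1 / k : ℝ) • (E j : Set ℕ).indicator (∑ i ∈ range k, x i) :=
          Set.indicator_const_smul _ (1 / k : ℝ) (∑ i ∈ range k, x i)
        rw [ite_mem_eq_indicator, hxavg, hsmul_indicator, hsmul, abs_of_nonneg (by positivity)]
        rfl
    _ ≤ 1 / k * (C * (k + 2 * d)) := by
        gcongr
        exact p.sum_indicator_sum_le_of_succBlocks hxsucc hE hEsucc hC0 hpiece
    _ = C * (1 + 2 * d / k) := by field_simp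

/-- Let `N` be a norm on `c₀₀(ℕ)` which is bimonotone (restriction to an
interval of coordinates does not increase the norm).  If
`x = (1/k)(x_1 + ⋯ + x_k)` is a `C`-`ℓ₁ᵏ` average (successive blocks `x_i`
of norm at most `C`, `N x ≥ 1`), then for every `d ≤ k` and successive
intervals `E_1 < ⋯ < E_d` of `ℕ`,
`∑_{i=1}^d N(E_i x) ≤ C (1 + 2d/k)`. -/
theorem stmt18 (N : (ℕ → ℝ) → ℝ)
    (hnonneg : ∀ v, 0 ≤ N v)
    (htri : ∀ v w : ℕ → ℝ, N (v + w) ≤ N v + N w)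
    (hsmul : ∀ (c : ℝ) (v : ℕ → ℝ), N (c • v) = |c| * N v)
    (hbimono : ∀ (v : ℕ → ℝ) (E : Finset ℕ), (∃ a b, E = Finset.Icc a b) →
      N (fun p => if p ∈ E then v p else 0) ≤ N v)
    (C : ℝ) (hC : 1 ≤ C) (k : ℕ) (hk : 1 ≤ k)
    (x : ℕ → (ℕ → ℝ)) (hxsucc : SuccBlocks x k)
    (hxC : ∀ i < k, N (x i) ≤ C)
    (xavg : ℕ → ℝ) (hxavg : xavg = (1 / (k : ℝ)) • ∑ i ∈ range k, x i)
    (hxavg1 : 1 ≤ N xavg)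
    (d : ℕ) (hd : d ≤ k) (E : ℕ → Finset ℕ)
    (hEint : ∀ i < d, ∃ a b, E i = Finset.Icc a b)
    (hEsucc : ∀ i j, i < j → j < d → ∀ p ∈ E i, ∀ q ∈ E j, p < q) :
    ∑ i ∈ range d, N (fun p => if p ∈ E i then xavg p else 0) ≤
      C * (1 + 2 * (d : ℝ) / (k : ℝ)) :=
  stmt18_general N htri hsmul hbimono C k hk x hxsucc hxC xavg hxavg d E hEint hEsucc
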